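/- arXiv:1710.00249 — 5 statements merged into one kernel-verified Lean document; each statement's English description precedes it below -/
import Mathlib

section
/- Fix an index i : N and a configuration s, and let s¹ and s⁰ be the configurations agreeing with s at every index j ≠ i, with s¹ i = 1 and s⁰ i = 0. Then the conditional probability under the Boltzmann distribution that node i is in state 1 given the states of all other nodes equals the sigmoid of the local field: P(s¹) / (P(s¹) + P(s⁰)) = σ(b i + ∑_{j ≠ i} w i j * s j). -/
/-!
Switching node `i` on changes the energy by exactly minus its local field: the diagonal weight
vanishes, and by symmetry the two cross terms `w i j` and `w j i` together cancel the factor `1/2`.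
Hence the two Boltzmann weights differ by the factor `exp (local field)`, the partition function
cancels in the ratio, and `e^a / (e^a + e^b) = σ (a - b)`.
-/

open Finset Function

lemma Real.exp_div_exp_add_exp (a b : ℝ) :
    Real.exp a / (Real.exp a + Real.exp b) = Real.sigmoid (a - b) := by
  rw [Real.sigmoid_def, neg_sub, Real.exp_sub]
  field_simp

namespace BoltzmannMachine

variable {N : Type*} [Fintype N]

noncomputable def energy (w : N → N → ℝ) (b : N → ℝ) (s : N → ℝ) : ℝ :=
  -(∑ i, b i * s i) - (1 / 2) * ∑ i, ∑ j, w i j * s i * s j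

variable [DecidableEq N]

def localField (w : N → N → ℝ) (b : N → ℝ) (i : N) (s : N → ℝ) : ℝ :=
  b i + ∑ j ∈ univ.erase i, w i j * s j

lemma sum_mul_update (f s : N → ℝ) (i : N) (c : ℝ) :
    ∑ j, f j * update s i c j = f i * c + ∑ j ∈ univ.erase i, f j * s j := by
  rw [← add_sum_erase _ _ (mem_univ i), update_self]
  congr 1
  exact sum_congr rfl fun j hj => by rw [update_of_ne (ne_of_mem_erase hj)]

lemma energy_update {w : N → N → ℝ} (hsym : ∀ i j, w i j = w j i) (hdiag : ∀ i, w i i = 0)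
    (b : N → ℝ) (s : N → ℝ) (i : N) (c : ℝ) :
    energy w b (update s i c) = energy w b (update s i 0) - c * localField w b i s := by
  have hquad : ∀ u : N → ℝ, ∑ j, ∑ k, w j k * u j * u k = ∑ j, (∑ k, w j k * u k) * u j :=
    fun u => sum_congr rfl fun j _ => by rw [sum_mul]; exact sum_congr rfl fun k _ => by ring
  have hcross : ∀ c : ℝ,
      ∑ j ∈ univ.erase i, w j i * c * s j = c * ∑ j ∈ univ.erase i, w i j * s j :=
    fun c => by rw [mul_sum]; exact sum_congr rfl fun j _ => by rw [hsym]; ring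
  rw [energy, energy, hquad, hquad]
  simp only [localField, sum_mul_update, hdiag, add_mul, sum_add_distrib, hcross]
  ring

end BoltzmannMachine

open BoltzmannMachine

theorem boltzmann_machine_conditional_sigmoid_general
    {N : Type*} [Fintype N] [DecidableEq N]
    (w : N → N → ℝ) (b : N → ℝ)
    (hsym : ∀ i j, w i j = w j i) (hdiag : ∀ i, w i i = 0)
    (E : (N → ℝ) → ℝ)
    (hE : ∀ s, E s = -(∑ i, b i * s i) - (1 / 2) * ∑ i, ∑ j, w i j * s i * s j)
    (P : (N → ℝ) → ℝ)
    (hP : ∀ s, P s = Real.exp (-E s) /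
      ∑ u : N → Bool, Real.exp (-E (fun j => if u j then 1 else 0)))
    (σ : ℝ → ℝ) (hσ : ∀ x, σ x = 1 / (1 + Real.exp (-x)))
    (i : N) (s : N → ℝ) :
    P (Function.update s i 1) /
        (P (Function.update s i 1) + P (Function.update s i 0))
      = σ (b i + ∑ j ∈ Finset.univ.erase i, w i j * s j) := by
  have hZ : ∑ u : N → Bool, Real.exp (-E fun j => if u j then 1 else 0) ≠ 0 :=
    (sum_pos (fun _ _ => Real.exp_pos _) univ_nonempty).ne'
  have hσ' : σ = Real.sigmoid := funext fun x => by rw [hσ, one_div, Real.sigmoid_def]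
  obtain rfl : E = energy w b := funext hE
  rw [hP, hP, ← add_div, div_div_div_cancel_right₀ hZ, energy_update hsym hdiag, one_mul, hσ',
    ← localField, Real.exp_div_exp_add_exp]
  congr 1
  ring

/-- Boltzmann machine conditional probability: under the Boltzmann
distribution, the conditional probability that node `i` is in state `1` given
the states of all other nodes equals the sigmoid of the local field. -/
theorem boltzmann_machine_conditional_sigmoid
    {N : Type*} [Fintype N] [DecidableEq N]
    (w : N → N → ℝ) (b : N → ℝ)
    (hsym : ∀ i j, w i j = w j i) (hdiag : ∀ i, w i i = 0)
    (E : (N → ℝ) → ℝ)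
    (hE : ∀ s, E s = -(∑ i, b i * s i) - (1 / 2) * ∑ i, ∑ j, w i j * s i * s j)
    (P : (N → ℝ) → ℝ)
    (hP : ∀ s, P s = Real.exp (-E s) /
      ∑ u : N → Bool, Real.exp (-E (fun j => if u j then 1 else 0)))
    (σ : ℝ → ℝ) (hσ : ∀ x, σ x = 1 / (1 + Real.exp (-x)))
    (i : N) (s : N → ℝ) (hs : ∀ j, s j = 0 ∨ s j = 1) :
    P (Function.update s i 1) /
        (P (Function.update s i 1) + P (Function.update s i 0))
      = σ (b i + ∑ j ∈ Finset.univ.erase i, w i j * s j) :=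
  boltzmann_machine_conditional_sigmoid_general w b hsym hdiag E hE P hP σ hσ i s
end

section
/- Define the single-site Gibbs-sampling kernel at index i, which maps a {0,1}-valued configuration s to the random configuration that agrees with s at every j ≠ i and whose value at i is 1 with probability σ(b i + ∑_{j ≠ i} w i j * s j) and 0 otherwise. Then the Boltzmann distribution on configurations is invariant under this kernel: binding the Boltzmann probability mass function with the kernel returns the Boltzmann probability mass function. -/
/-!
The kernel resamples coordinate `i` from the conditional law of `π` given the other
coordinates, and every such kernel leaves `π` invariant: the mass arriving at `t` comes only
from the fiber `{update t i c}`, and the fiber's total mass times the conditional probability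
of `t` is `π t`. For the Boltzmann distribution, writing `s⁰, s¹` for `s` with `s i` set to
`0, 1`, the conditional probability of `s¹` is `e^{-E s¹} / (e^{-E s⁰} + e^{-E s¹})`, which is
`σ (E s⁰ - E s¹)`; because `w` is symmetric with zero diagonal, the energy gap `E s⁰ - E s¹`
is the local field `b i + ∑_{j ≠ i} w i j * s j`.
-/

open Function Finset

namespace PMF

variable {N β : Type*} [DecidableEq N]

theorem bind_apply_eq_tsum_update (π : PMF (N → β)) (K : (N → β) → PMF (N → β)) (i : N)
    (hK : ∀ s t, t ≠ update s i (t i) → K s t = 0) (t : N → β) :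
    π.bind K t = ∑' c, π (update t i c) * K (update t i c) t := by
  rw [bind_apply]
  refine ((update_injective t i).tsum_eq (f := fun s => π s * K s t)
    fun s hs => ⟨s i, ?_⟩).symm
  have hts : t = update s i (t i) := by_contra fun h => hs (by simp [hK s t h])
  rw [hts, update_idem, update_eq_self]

theorem bind_eq_self_of_resample_conditional (π : PMF (N → β))
    (K : (N → β) → PMF (N → β)) (i : N)
    (hK_off : ∀ s t, t ≠ update s i (t i) → K s t = 0)
    (hK_on : ∀ s c, K s (update s i c) = π (update s i c) / ∑' c', π (update s i c')) :
    π.bind K = π := by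
  ext t
  have hK_fiber : ∀ c, K (update t i c) t = π t / ∑' c', π (update t i c') := fun c => by
    simpa [update_idem] using hK_on (update t i c) (t i)
  simp only [bind_apply_eq_tsum_update π K i hK_off, hK_fiber, ENNReal.tsum_mul_right]
  have hle : π t ≤ ∑' c, π (update t i c) := by
    simpa using ENNReal.le_tsum (f := fun c => π (update t i c)) (t i)
  have hne_top : ∑' c, π (update t i c) ≠ ⊤ :=
    ne_top_of_le_ne_top ENNReal.one_ne_top
      ((ENNReal.tsum_comp_le_tsum_of_injective (update_injective t i) π).trans π.tsum_coe.le)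
  rcases eq_or_ne (∑' c, π (update t i c)) 0 with h0 | h0
  · simp [h0, le_zero_iff.mp (h0 ▸ hle)]
  · exact ENNReal.mul_div_cancel h0 hne_top

end PMF

section Energy

variable {N : Type*} [Fintype N] [DecidableEq N]

noncomputable def boltzmannEnergy (w : N → N → ℝ) (b x : N → ℝ) : ℝ :=
  -(∑ i, b i * x i) - 1 / 2 * ∑ i, ∑ j, w i j * x i * x j

theorem boltzmannEnergy_update_zero_sub_update_one {w : N → N → ℝ}
    (hsym : ∀ i j, w i j = w j i) (hdiag : ∀ i, w i i = 0) (b x : N → ℝ) (i : N) :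
    boltzmannEnergy w b (update x i 0) - boltzmannEnergy w b (update x i 1) =
      b i + ∑ j ∈ univ.erase i, w i j * x j := by
  set y := update x i 0
  have hy : update x i 1 = fun j => y j + if j = i then 1 else 0 := by
    ext j; rcases eq_or_ne j i with rfl | hj <;> simp [y, *]
  have hfield : ∑ j, w i j * y j = ∑ j ∈ univ.erase i, w i j * x j := by
    rw [← sum_erase_add _ _ (mem_univ i)]
    simp only [y, update_self, mul_zero, add_zero]
    exact sum_congr rfl fun j hj => by rw [update_of_ne (ne_of_mem_erase hj)]
  simp only [boltzmannEnergy, hy, mul_add, add_mul, sum_add_distrib, mul_ite, ite_mul, mul_one,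
    mul_zero, zero_mul, sum_ite_irrel, sum_const_zero, sum_ite_eq', mem_univ, if_true, hdiag,
    hsym _ i]
  rw [hfield]
  ring

theorem boltzmannEnergy_update_false_sub_update_true {w : N → N → ℝ}
    (hsym : ∀ i j, w i j = w j i) (hdiag : ∀ i, w i i = 0) (b : N → ℝ) (s : N → Bool)
    (i : N) :
    boltzmannEnergy w b (fun j => if update s i false j then 1 else 0) -
        boltzmannEnergy w b (fun j => if update s i true j then 1 else 0) =
      b i + ∑ j ∈ univ.erase i, w i j * (if s j then 1 else 0) := by
  have hspin : ∀ c : Bool, (fun j => if update s i c j then (1 : ℝ) else 0) =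
      update (fun j => if s j then (1 : ℝ) else 0) i (if c then 1 else 0) := fun c =>
    funext (apply_update (fun _ c => if c then (1 : ℝ) else 0) s i c)
  rw [hspin, hspin]
  exact boltzmannEnergy_update_zero_sub_update_one hsym hdiag b _ i

end Energy

namespace Real

theorem sigmoid_sub_eq_exp_div (a b : ℝ) :
    sigmoid (b - a) = exp (-a) / (exp (-a) + exp (-b)) := by
  rw [sigmoid_def, neg_sub, exp_sub]
  field_simp
  simp only [mul_add, add_mul, ← exp_add]
  ring_nf

end Real

theorem ENNReal.ofReal_sigmoid_sub_eq_div {Z : ℝ} (hZ : 0 < Z) (a b : ℝ) :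
    ENNReal.ofReal (Real.sigmoid (b - a)) = ENNReal.ofReal (Real.exp (-a) / Z) /
      (ENNReal.ofReal (Real.exp (-a) / Z) + ENNReal.ofReal (Real.exp (-b) / Z)) := by
  rw [← ENNReal.ofReal_add (by positivity) (by positivity),
    ← ENNReal.ofReal_div_of_pos (by positivity), Real.sigmoid_sub_eq_exp_div, ← add_div,
    div_div_div_cancel_right₀ hZ.ne']

/-- The Boltzmann distribution of a Boltzmann machine is invariant under the
single-site Gibbs-sampling kernel at any index `i`: binding the Boltzmann
probability mass function with the kernel returns the Boltzmann pmf. -/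
theorem boltzmann_pmf_invariant_gibbs_kernel
    {N : Type*} [Fintype N] [DecidableEq N]
    (w : N → N → ℝ) (b : N → ℝ)
    (hsym : ∀ i j, w i j = w j i) (hdiag : ∀ i, w i i = 0)
    (E : (N → Bool) → ℝ)
    (hE : ∀ s, E s = -(∑ i, b i * (if s i then (1 : ℝ) else 0)) -
      (1 / 2) * ∑ i, ∑ j, w i j * (if s i then (1 : ℝ) else 0) *
        (if s j then (1 : ℝ) else 0))
    (σ : ℝ → ℝ) (hσ : ∀ x, σ x = 1 / (1 + Real.exp (-x)))
    (i : N)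
    (π : PMF (N → Bool))
    (hπ : ∀ s, π s = ENNReal.ofReal
      (Real.exp (-E s) / ∑ u : N → Bool, Real.exp (-E u)))
    (K : (N → Bool) → PMF (N → Bool))
    (hK : ∀ s t, K s t =
      if t = Function.update s i true then
        ENNReal.ofReal (σ (b i + ∑ j ∈ Finset.univ.erase i,
          w i j * (if s j then (1 : ℝ) else 0)))
      else if t = Function.update s i false then
        ENNReal.ofReal (1 - σ (b i + ∑ j ∈ Finset.univ.erase i,
          w i j * (if s j then (1 : ℝ) else 0)))
      else 0) :
    π.bind K = π := by
  have hσ_eq : σ = Real.sigmoid := funext fun x => by rw [hσ, Real.sigmoid_def, one_div]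
  have hZ : 0 < ∑ u : N → Bool, Real.exp (-E u) :=
    sum_pos (fun u _ => Real.exp_pos _) univ_nonempty
  have hfield : ∀ s, E (update s i false) - E (update s i true) =
      b i + ∑ j ∈ univ.erase i, w i j * (if s j then (1 : ℝ) else 0) := fun s => by
    rw [hE, hE]
    exact boltzmannEnergy_update_false_sub_update_true hsym hdiag b s i
  refine π.bind_eq_self_of_resample_conditional K i (fun s t ht => ?_) (fun s c => ?_)
  · have h_true : t ≠ update s i true := fun h => ht (by rw [h, update_self])
    have h_false : t ≠ update s i false := fun h => ht (by rw [h, update_self])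
    rw [hK, if_neg h_true, if_neg h_false]
  · rw [tsum_fintype, Fintype.sum_bool, hK, hσ_eq, ← hfield]
    simp only [hπ]
    cases c
    · rw [if_neg (fun h => by simpa using congrFun h i), if_pos rfl, ← Real.sigmoid_neg, neg_sub,
        add_comm (ENNReal.ofReal _), ENNReal.ofReal_sigmoid_sub_eq_div hZ]
    · rw [if_pos rfl, ENNReal.ofReal_sigmoid_sub_eq_div hZ]
end

section
/- Fix a visible configuration v and a hidden unit j : H. Then the conditional probability under the joint Boltzmann distribution that hidden unit j equals 1 given v is the sigmoid of its input: (∑ over hidden configurations h with h j = 1 of P(v,h)) / (∑ over all hidden configurations h of P(v,h)) = σ(c j + ∑_i v i * w i j). -/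
/-!
Flipping hidden unit `j` from `1` to `0` raises the energy by exactly its input
`a = c j + ∑ i, v i * w i j`, because the energy is affine in each hidden unit. Hence the
hidden configurations with `h j = 0` carry `exp (-a)` times the total weight of those with
`h j = 1`, and the conditional probability is `1 / (1 + exp (-a))`; the partition function
cancels.
-/

open Finset Function Real

section BooleanConfigurations

variable {H : Type*} [Fintype H] [DecidableEq H]

lemma sum_filter_false_eq_mul_sum_filter_true (g : (H → Bool) → ℝ) (j : H) (r : ℝ)
    (hg : ∀ h, g (update h j false) = r * g (update h j true)) :
    ∑ h ∈ univ.filter (fun h : H → Bool => h j = false), g h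
      = r * ∑ h ∈ univ.filter (fun h : H → Bool => h j = true), g h := by
  rw [mul_sum]
  refine sum_nbij' (update · j true) (update · j false) ?_ ?_ ?_ ?_ ?_
  all_goals intro h hh
  all_goals simp only [mem_filter, mem_univ, true_and] at hh
  · simp
  · simp
  · rw [update_idem, ← hh, update_eq_self]
  · rw [update_idem, ← hh, update_eq_self]
  · rw [← hg, ← hh, update_eq_self]

lemma sum_filter_true_div_sum_eq_one_div_one_add (g : (H → Bool) → ℝ) (j : H) (r : ℝ)
    (hg : ∀ h, g (update h j false) = r * g (update h j true))
    (hpos : 0 < ∑ h ∈ univ.filter (fun h : H → Bool => h j = true), g h) (hr : 0 ≤ r) :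
    (∑ h ∈ univ.filter (fun h : H → Bool => h j = true), g h) / ∑ h, g h = 1 / (1 + r) := by
  rw [← sum_filter_add_sum_filter_not univ (fun h : H → Bool => h j = true)]
  simp only [Bool.not_eq_true]
  rw [sum_filter_false_eq_mul_sum_filter_true g j r hg]
  field_simp

lemma sum_mul_ite_update_true (a : H → ℝ) (h : H → Bool) (j : H) :
    ∑ k, a k * (if update h j true k then 1 else 0)
      = ∑ k, a k * (if update h j false k then 1 else 0) + a j := by
  rw [← sub_eq_iff_eq_add', ← sum_sub_distrib]
  simp_rw [← mul_sub]
  rw [sum_eq_single j]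
  · simp
  · intro k _ hk; simp [update_of_ne hk]
  · simp

end BooleanConfigurations

lemma rbm_hidden_energy_eq_sum_input {V H : Type*} [Fintype V] [Fintype H]
    (w : V → H → ℝ) (c : H → ℝ) (v : V → ℝ) (x : H → ℝ) :
    (∑ j, c j * x j) + ∑ i, ∑ j, v i * w i j * x j = ∑ j, (c j + ∑ i, v i * w i j) * x j := by
  simp_rw [add_mul, sum_add_distrib, sum_mul]
  rw [sum_comm]

theorem rbm_hidden_conditional_sigmoid_general
    {V H : Type*} [Fintype V] [Fintype H] [DecidableEq V] [DecidableEq H]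
    (w : V → H → ℝ) (b : V → ℝ) (c : H → ℝ)
    (E : (V → ℝ) → (H → ℝ) → ℝ)
    (hE : ∀ v h, E v h = -(∑ i, b i * v i) - (∑ j, c j * h j) -
      ∑ i, ∑ j, v i * w i j * h j)
    (Z : ℝ)
    (hZ : Z = ∑ p : (V → Bool) × (H → Bool),
      Real.exp (-(E (fun i => if p.1 i then 1 else 0)
        (fun j => if p.2 j then 1 else 0))))
    (P : (V → ℝ) → (H → ℝ) → ℝ)
    (hP : ∀ v h, P v h = Real.exp (-(E v h)) / Z)
    (σ : ℝ → ℝ) (hσ : ∀ x, σ x = 1 / (1 + Real.exp (-x)))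
    (v : V → ℝ) (j : H) :
    (∑ h ∈ Finset.univ.filter (fun h : H → Bool => h j = true),
        P v (fun k => if h k then 1 else 0)) /
      (∑ h : H → Bool, P v (fun k => if h k then 1 else 0))
      = σ (c j + ∑ i, v i * w i j) := by
  set a := c j + ∑ i, v i * w i j
  have hZ_pos : 0 < Z := hZ ▸ sum_pos (fun _ _ => exp_pos _) univ_nonempty
  have hP_pos : ∀ x, 0 < P v x := fun x => hP v x ▸ div_pos (exp_pos _) hZ_pos
  have hflip : ∀ h : H → Bool, P v (fun k => if update h j false k then 1 else 0)
      = exp (-a) * P v (fun k => if update h j true k then 1 else 0) := by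
    intro h
    have hE_flip : E v (fun k => if update h j false k then 1 else 0)
        = E v (fun k => if update h j true k then 1 else 0) + a := by
      rw [hE, hE, sub_sub, sub_sub, rbm_hidden_energy_eq_sum_input,
        rbm_hidden_energy_eq_sum_input, sum_mul_ite_update_true]
      ring
    rw [hP, hP, hE_flip, neg_add, exp_add]
    ring
  rw [sum_filter_true_div_sum_eq_one_div_one_add _ j _ hflip
    (sum_pos (fun _ _ => hP_pos _) ⟨fun _ => true, by simp⟩) (exp_pos _).le, hσ]

/-- RBM: the conditional probability under the joint Boltzmann distribution
that hidden unit `j` equals `1` given the visible configuration `v` is the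
sigmoid of its input `c j + ∑ i, v i * w i j`. -/
theorem rbm_hidden_conditional_sigmoid
    {V H : Type*} [Fintype V] [Fintype H] [DecidableEq V] [DecidableEq H]
    (w : V → H → ℝ) (b : V → ℝ) (c : H → ℝ)
    (E : (V → ℝ) → (H → ℝ) → ℝ)
    (hE : ∀ v h, E v h = -(∑ i, b i * v i) - (∑ j, c j * h j) -
      ∑ i, ∑ j, v i * w i j * h j)
    (Z : ℝ)
    (hZ : Z = ∑ p : (V → Bool) × (H → Bool),
      Real.exp (-(E (fun i => if p.1 i then 1 else 0)
        (fun j => if p.2 j then 1 else 0))))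
    (P : (V → ℝ) → (H → ℝ) → ℝ)
    (hP : ∀ v h, P v h = Real.exp (-(E v h)) / Z)
    (σ : ℝ → ℝ) (hσ : ∀ x, σ x = 1 / (1 + Real.exp (-x)))
    (v : V → ℝ) (hv : ∀ i, v i = 0 ∨ v i = 1) (j : H) :
    (∑ h ∈ Finset.univ.filter (fun h : H → Bool => h j = true),
        P v (fun k => if h k then 1 else 0)) /
      (∑ h : H → Bool, P v (fun k => if h k then 1 else 0))
      = σ (c j + ∑ i, v i * w i j) :=
  rbm_hidden_conditional_sigmoid_general w b c E hE Z hZ P hP σ hσ v j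
end

section
/- Fix a hidden configuration h and a visible unit i : V. Then the conditional probability under the joint Boltzmann distribution that visible unit i equals 1 given h is the sigmoid of its input: (∑ over visible configurations v with v i = 1 of P(v,h)) / (∑ over all visible configurations v of P(v,h)) = σ(b i + ∑_j w i j * h j). -/
/-!
Flipping visible unit `i` from `0` to `1` multiplies the Boltzmann weight `exp (-E (v, h))` by
`exp a`, where `a = b i + ∑ j, w i j * h j`, because the negative energy is affine in `v` with
coefficient `a` at `v i`. So the configurations with `v i = 1` carry `exp a` times the weight of
those with `v i = 0`, and after `Z` cancels the conditional probability is
`exp a / (exp a + 1) = σ a`.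
-/

open Finset Function Real Matrix

section BoolConfigurations

variable {V : Type*} [DecidableEq V]

lemma sum_filter_eq_true_eq_sum_filter_eq_false_update [Fintype V] {M : Type*} [AddCommMonoid M]
    (F : (V → Bool) → M) (i : V) :
    ∑ v with v i = true, F v = ∑ v with v i = false, F (update v i true) := by
  refine sum_nbij' (update · i false) (update · i true) ?_ ?_ ?_ ?_ fun v hv => ?_
  all_goals try (intro v hv; simp_all)
  rw [← (mem_filter.mp hv).2, update_idem, update_eq_self]

lemma sum_filter_eq_true_eq_mul_sum_filter_eq_false [Fintype V] {R : Type*} [CommSemiring R]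
    {F : (V → Bool) → R} {r : R} (i : V)
    (hF : ∀ v, F (update v i true) = r * F (update v i false)) :
    ∑ v with v i = true, F v = r * ∑ v with v i = false, F v := by
  rw [sum_filter_eq_true_eq_sum_filter_eq_false_update, mul_sum]
  refine sum_congr rfl fun v hv => ?_
  rw [hF, update_eq_self_iff.mpr (mem_filter.mp hv).2.symm]

lemma indicator_update_true (v : V → Bool) (i : V) :
    (fun k => if update v i true k then (1 : ℝ) else 0) =
      (fun k => if update v i false k then 1 else 0) + Pi.single i 1 := by
  ext k
  rcases eq_or_ne k i with rfl | hk <;> simp [*]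

end BoolConfigurations

lemma neg_rbm_energy_eq {V H : Type*} [Fintype V] [Fintype H]
    (w : V → H → ℝ) (b : V → ℝ) (c : H → ℝ) (v : V → ℝ) (h : H → ℝ) :
    -(-(∑ i, b i * v i) - (∑ j, c j * h j) - ∑ i, ∑ j, v i * w i j * h j) =
      ∑ j, c j * h j + v ⬝ᵥ fun i => b i + ∑ j, w i j * h j := by
  simp only [dotProduct, mul_add, mul_sum, sum_add_distrib]
  simp only [mul_comm, mul_left_comm]
  ring

lemma Real.exp_mul_div_exp_mul_add_self (a : ℝ) {s : ℝ} (hs : s ≠ 0) :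
    exp a * s / (exp a * s + s) = sigmoid a := by
  rw [sigmoid_def, exp_neg]
  field_simp

theorem rbm_visible_conditional_sigmoid_general
    {V H : Type*} [Fintype V] [Fintype H] [DecidableEq V] [DecidableEq H]
    (w : V → H → ℝ) (b : V → ℝ) (c : H → ℝ)
    (E : (V → ℝ) → (H → ℝ) → ℝ)
    (hE : ∀ v h, E v h = -(∑ i, b i * v i) - (∑ j, c j * h j) -
      ∑ i, ∑ j, v i * w i j * h j)
    (Z : ℝ)
    (hZ : Z = ∑ p : (V → Bool) × (H → Bool),
      Real.exp (-(E (fun i => if p.1 i then 1 else 0)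
        (fun j => if p.2 j then 1 else 0))))
    (P : (V → ℝ) → (H → ℝ) → ℝ)
    (hP : ∀ v h, P v h = Real.exp (-(E v h)) / Z)
    (σ : ℝ → ℝ) (hσ : ∀ x, σ x = 1 / (1 + Real.exp (-x)))
    (h : H → ℝ) (i : V) :
    (∑ v ∈ Finset.univ.filter (fun v : V → Bool => v i = true),
        P (fun k => if v k then 1 else 0) h) /
      (∑ v : V → Bool, P (fun k => if v k then 1 else 0) h)
      = σ (b i + ∑ j, w i j * h j) := by
  set a := b i + ∑ j, w i j * h j with ha
  set F : (V → Bool) → ℝ := fun v => exp (-E (fun k => if v k then 1 else 0) h)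
  have hF : ∀ v, F (update v i true) = exp a * F (update v i false) := by
    intro v
    simp only [F, hE, neg_rbm_energy_eq, indicator_update_true, add_dotProduct,
      single_dotProduct, one_mul, ← exp_add, ha]
    congr 1
    ring
  have hZ_pos : 0 < Z := hZ ▸ sum_pos (fun _ _ => exp_pos _) univ_nonempty
  have hF_false_pos : 0 < ∑ v with v i = false, F v :=
    sum_pos (fun _ _ => exp_pos _) ⟨fun _ => false, by simp⟩
  have hsplit : ∑ v, F v = ∑ v with v i = true, F v + ∑ v with v i = false, F v := by
    simpa using (sum_filter_add_sum_filter_not univ (fun v => v i = true) F).symm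
  calc _ = (∑ v with v i = true, F v) / ∑ v, F v := by
        simp only [hP, ← sum_div]
        exact div_div_div_cancel_right₀ hZ_pos.ne' _ _
    _ = sigmoid a := by
        rw [hsplit, sum_filter_eq_true_eq_mul_sum_filter_eq_false i hF,
          exp_mul_div_exp_mul_add_self _ hF_false_pos.ne']
    _ = σ a := by rw [hσ, one_div, sigmoid_def]

/-- RBM: the conditional probability under the joint Boltzmann distribution
that visible unit `i` equals `1` given the hidden configuration `h` is the
sigmoid of its input `b i + ∑ j, w i j * h j`. -/
theorem rbm_visible_conditional_sigmoid
    {V H : Type*} [Fintype V] [Fintype H] [DecidableEq V] [DecidableEq H]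
    (w : V → H → ℝ) (b : V → ℝ) (c : H → ℝ)
    (E : (V → ℝ) → (H → ℝ) → ℝ)
    (hE : ∀ v h, E v h = -(∑ i, b i * v i) - (∑ j, c j * h j) -
      ∑ i, ∑ j, v i * w i j * h j)
    (Z : ℝ)
    (hZ : Z = ∑ p : (V → Bool) × (H → Bool),
      Real.exp (-(E (fun i => if p.1 i then 1 else 0)
        (fun j => if p.2 j then 1 else 0))))
    (P : (V → ℝ) → (H → ℝ) → ℝ)
    (hP : ∀ v h, P v h = Real.exp (-(E v h)) / Z)
    (σ : ℝ → ℝ) (hσ : ∀ x, σ x = 1 / (1 + Real.exp (-x)))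
    (h : H → ℝ) (hh : ∀ j, h j = 0 ∨ h j = 1) (i : V) :
    (∑ v ∈ Finset.univ.filter (fun v : V → Bool => v i = true),
        P (fun k => if v k then 1 else 0) h) /
      (∑ v : V → Bool, P (fun k => if v k then 1 else 0) h)
      = σ (b i + ∑ j, w i j * h j) :=
  rbm_visible_conditional_sigmoid_general w b c E hE Z hZ P hP σ hσ h i
end

section
/- The marginal distribution of the visible layer under the joint Boltzmann distribution has the closed form: for every visible configuration v, ∑ over all hidden configurations h of P(v,h) = exp(∑_i b i * v i) * ∏_j (1 + exp(c j + ∑_i v i * w i j)) / Z. -/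
/-- RBM: closed form for the marginal distribution of the visible layer under
the joint Boltzmann distribution. -/
theorem rbm_visible_marginal_closed_form
    {V H : Type*} [Fintype V] [Fintype H] [DecidableEq V] [DecidableEq H]
    (w : V → H → ℝ) (b : V → ℝ) (c : H → ℝ)
    (E : (V → ℝ) → (H → ℝ) → ℝ)
    (hE : ∀ v h, E v h = -(∑ i, b i * v i) - (∑ j, c j * h j) -
      ∑ i, ∑ j, v i * w i j * h j)
    (Z : ℝ)
    (hZ : Z = ∑ p : (V → Bool) × (H → Bool),
      Real.exp (-(E (fun i => if p.1 i then 1 else 0)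
        (fun j => if p.2 j then 1 else 0))))
    (P : (V → ℝ) → (H → ℝ) → ℝ)
    (hP : ∀ v h, P v h = Real.exp (-(E v h)) / Z)
    (v : V → ℝ) (hv : ∀ i, v i = 0 ∨ v i = 1) :
    (∑ h : H → Bool, P v (fun k => if h k then 1 else 0))
      = Real.exp (∑ i, b i * v i) *
          (∏ j : H, (1 + Real.exp (c j + ∑ i, v i * w i j))) / Z := by
  simp only [hP, hE]
  rw [← Finset.sum_div]
  congr 1
  have hexp : ∀ h : H → Bool,
      -(-(∑ i, b i * v i) - (∑ j, c j * (if h j then (1:ℝ) else 0)) -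
        ∑ i, ∑ j, v i * w i j * (if h j then (1:ℝ) else 0))
      = (∑ i, b i * v i) + ∑ j, (c j + ∑ i, v i * w i j) * (if h j then (1:ℝ) else 0) := by
    intro h
    rw [Finset.sum_comm (s := Finset.univ) (t := Finset.univ)
      (f := fun i j => v i * w i j * (if h j then (1:ℝ) else 0))]
    simp only [add_mul, Finset.sum_add_distrib, Finset.sum_mul]
    ring
  calc (∑ h : H → Bool, Real.exp (-(-(∑ i, b i * v i) - (∑ j, c j * (if h j then (1:ℝ) else 0)) -
        ∑ i, ∑ j, v i * w i j * (if h j then (1:ℝ) else 0))))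
      = ∑ h : H → Bool, Real.exp (∑ i, b i * v i) *
          ∏ j, (if h j then Real.exp (c j + ∑ i, v i * w i j) else 1) := by
        refine Finset.sum_congr rfl fun h _ => ?_
        rw [hexp h, Real.exp_add, Real.exp_sum Finset.univ
          (fun j => (c j + ∑ i, v i * w i j) * if h j then (1:ℝ) else 0)]
        refine congrArg _ (Finset.prod_congr rfl fun j _ => ?_)
        rw [mul_ite, mul_one, mul_zero, apply_ite Real.exp, Real.exp_zero]
    _ = Real.exp (∑ i, b i * v i) * ∑ h : H → Bool,
          ∏ j, (if h j then Real.exp (c j + ∑ i, v i * w i j) else 1) := by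
        rw [Finset.mul_sum]
    _ = Real.exp (∑ i, b i * v i) * ∏ j : H, (1 + Real.exp (c j + ∑ i, v i * w i j)) := by
        congr 1
        rw [← Fintype.piFinset_univ, ← Finset.prod_univ_sum
          (t := fun _ : H => (Finset.univ : Finset Bool))
          (f := fun j x => if x = true then Real.exp (c j + ∑ i, v i * w i j) else 1)]
        refine Finset.prod_congr rfl fun j _ => ?_
        simp [Fintype.sum_bool, add_comm]
end
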